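/- arXiv:2004.03593 — 2 statements merged into one kernel-verified Lean document; each statement's English description precedes it below -/
import Mathlib

section
/- Let f : [0,1] → [0,1] be normal and convex with R¹(f) < 1. Then, for all x ∈ [0,1), f^R(x) = sup{f(y) : y ∈ [x, 1)}. -/
open Set Classical

noncomputable section

/-- Left envelope: `f^L(x) = sup {f y : 0 ≤ y ≤ x}`. -/
def fL (f : ℝ → ℝ) (x : ℝ) : ℝ := sSup (f '' Set.Icc 0 x)

/-- Weak left envelope: `f^{Lw}(x) = sup {f y : 0 ≤ y < x}` (for `x ∈ (0,1]`). -/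
def fLw (f : ℝ → ℝ) (x : ℝ) : ℝ := sSup (f '' Set.Ico 0 x)

/-- Right envelope: `f^R(x) = sup {f y : x ≤ y ≤ 1}`. -/
def fR (f : ℝ → ℝ) (x : ℝ) : ℝ := sSup (f '' Set.Icc x 1)

/-- `f` maps `[0,1]` into `[0,1]`. -/
def MapsI (f : ℝ → ℝ) : Prop := ∀ x ∈ Set.Icc (0:ℝ) 1, f x ∈ Set.Icc (0:ℝ) 1

/-- `f` is normal: `sup f = 1` on `[0,1]`. -/
def NormalFn (f : ℝ → ℝ) : Prop := sSup (f '' Set.Icc 0 1) = 1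

/-- `f` is convex: `f y ≥ min (f x) (f z)` whenever `0 ≤ x ≤ y ≤ z ≤ 1`. -/
def ConvexFn (f : ℝ → ℝ) : Prop :=
  ∀ x y z : ℝ, 0 ≤ x → x ≤ y → y ≤ z → z ≤ 1 → min (f x) (f z) ≤ f y

/-- Convolution intersection: `(f ⊓ g)(x) = sup {min (f y) (g z) : min y z = x}`. -/
def inter (f g : ℝ → ℝ) (x : ℝ) : ℝ :=
  sSup {v | ∃ y ∈ Set.Icc (0:ℝ) 1, ∃ z ∈ Set.Icc (0:ℝ) 1, min y z = x ∧ v = min (f y) (g z)}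

/-- Convolution union: `(f ⊔ g)(x) = sup {min (f y) (g z) : max y z = x}`. -/
def union (f g : ℝ → ℝ) (x : ℝ) : ℝ :=
  sSup {v | ∃ y ∈ Set.Icc (0:ℝ) 1, ∃ z ∈ Set.Icc (0:ℝ) 1, max y z = x ∧ v = min (f y) (g z)}

/-- `L₁(f) = inf {x ∈ [0,1] : f^L(x) = 1}`. -/
def L1 (f : ℝ → ℝ) : ℝ := sInf {x ∈ Set.Icc (0:ℝ) 1 | fL f x = 1}

/-- `R¹(f) = sup {x ∈ [0,1] : f^R(x) = 1}`. -/
def R1 (f : ℝ → ℝ) : ℝ := sSup {x ∈ Set.Icc (0:ℝ) 1 | fR f x = 1}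

/-- The characteristic function `1_{{1}}`. -/
def ind1 : ℝ → ℝ := fun x => if x = 1 then 1 else 0

/-- The modified intersection `f ⋆ g`. -/
def star (f g : ℝ → ℝ) : ℝ → ℝ :=
  if Set.EqOn f ind1 (Set.Icc (0:ℝ) 1) then g
  else if Set.EqOn g ind1 (Set.Icc (0:ℝ) 1) then f
  else if min (f 1) (g 1) = 1 then inter f g
  else fun x => if x = 1 then 0 else inter f g x

/-
If `f 1 = 1` then `f^R(1) = 1`, so `R¹(f) = 1`; hence `f 1 < 1 = sup f`, and some `y` has
`f 1 < f y`. Convexity then yields a point `w ∈ [x, 1)` with `f 1 ≤ f w` (take `w = y` if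
`x ≤ y`, and `w = x` otherwise), so adding the endpoint `1` to `[x, 1)` does not change the
supremum.
-/

theorem sSup_image_Icc_eq_sSup_image_Ico {α β : Type*} [LinearOrder α]
    [ConditionallyCompleteLinearOrder β] {f : α → β} {a b w : α}
    (hbdd : BddAbove (f '' Ico a b)) (hw : w ∈ Ico a b) (hfw : f b ≤ f w) :
    sSup (f '' Icc a b) = sSup (f '' Ico a b) := by
  have hab : a ≤ b := hw.1.trans hw.2.le
  rw [← Ico_insert_right hab, image_insert_eq,
    csSup_insert hbdd ⟨f w, mem_image_of_mem f hw⟩, sup_eq_right]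
  exact hfw.trans (le_csSup hbdd (mem_image_of_mem f hw))

theorem MapsI.bddAbove_image {f : ℝ → ℝ} (hf : MapsI f) {s : Set ℝ} (hs : s ⊆ Icc 0 1) :
    BddAbove (f '' s) :=
  ⟨1, by rintro _ ⟨y, hy, rfl⟩; exact (hf y (hs hy)).2⟩

theorem fR_one (f : ℝ → ℝ) : fR f 1 = f 1 := by
  rw [fR, Icc_self, image_singleton, csSup_singleton]

theorem MapsI.apply_one_lt_one {f : ℝ → ℝ} (hf : MapsI f) (hR : R1 f < 1) : f 1 < 1 := by
  refine (hf 1 ⟨zero_le_one, le_rfl⟩).2.lt_of_ne fun h1 => hR.not_ge ?_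
  have h1mem : (1 : ℝ) ∈ {x ∈ Icc (0 : ℝ) 1 | fR f x = 1} :=
    ⟨⟨zero_le_one, le_rfl⟩, (fR_one f).trans h1⟩
  exact le_csSup ⟨1, fun _ hz => hz.1.2⟩ h1mem

theorem NormalFn.exists_apply_one_lt {f : ℝ → ℝ} (hfn : NormalFn f) (h1 : f 1 < 1) :
    ∃ y ∈ Icc (0 : ℝ) 1, f 1 < f y := by
  by_contra! h
  have hsup : sSup (f '' Icc 0 1) ≤ f 1 :=
    csSup_le ⟨f 1, mem_image_of_mem f ⟨zero_le_one, le_rfl⟩⟩ (by rintro _ ⟨y, hy, rfl⟩; exact h y hy)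
  rw [hfn] at hsup
  exact h1.not_ge hsup

theorem ConvexFn.exists_mem_Ico_apply_one_le {f : ℝ → ℝ} (hfc : ConvexFn f) {x y : ℝ}
    (hx : x < 1) (hy : y ∈ Icc (0 : ℝ) 1) (hfy : f 1 < f y) :
    ∃ w ∈ Ico x 1, f 1 ≤ f w := by
  rcases le_or_gt x y with hxy | hyx
  · have hy1 : y < 1 := hy.2.lt_of_ne (by rintro rfl; exact hfy.false)
    exact ⟨y, ⟨hxy, hy1⟩, hfy.le⟩
  · refine ⟨x, ⟨le_rfl, hx⟩, ?_⟩
    simpa [min_eq_right hfy.le] using hfc y x 1 hy.1 hyx.le hx.le le_rfl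

/-- if `f` is normal convex and `R¹(f) < 1`, then for all `x ∈ [0,1)`,
`f^R(x) = sup {f y : y ∈ [x,1)}`. -/
theorem stmt_9 (f : ℝ → ℝ) (hf : MapsI f) (hfn : NormalFn f) (hfc : ConvexFn f)
    (hR : R1 f < 1) :
    ∀ x : ℝ, 0 ≤ x → x < 1 → fR f x = sSup (f '' Set.Ico x 1) := by
  intro x hx0 hx1
  obtain ⟨y, hy, hfy⟩ := hfn.exists_apply_one_lt (hf.apply_one_lt_one hR)
  obtain ⟨w, hw, hfw⟩ := hfc.exists_mem_Ico_apply_one_le hx1 hy hfy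
  exact sSup_image_Icc_eq_sSup_image_Ico
    (hf.bddAbove_image fun z hz => ⟨hx0.trans hz.1, hz.2.le⟩) hw hfw
end
end

section
/- For normal, convex functions f, g : [0,1] → [0,1], the modified intersection f ⋆ g is again normal and convex. -/
open Set Classical

noncomputable section

/-!
Pushing witnesses inward makes `f ⊓ g` convex: if `min a₁ a₂ = x ≤ y ≤ z = min b₁ b₂`, then
`(max a₁ y, max a₂ y)` is a witness for `y`, and convexity of `f` (resp. `g`) bounds its value at
`max a₁ y ∈ [a₁, b₁]` below by `min (f a₁) (f b₁)`. Near-maximal points `y` of `f` and `z` of `g`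
give near-maximal values of `f ⊓ g` at `min y z`, so `f ⊓ g` is normal. Zeroing a nonnegative
convex function at the right endpoint keeps it convex, and when `min (f 1) (g 1) < 1` the
supremum of `f ⊓ g` is approached at points `min y z < 1`, so it stays normal.
-/

section

variable {f g h : ℝ → ℝ}

lemma NormalFn.exists_lt (hfn : NormalFn f) {c : ℝ} (hc : c < 1) :
    ∃ y ∈ Icc (0 : ℝ) 1, c < f y := by
  obtain ⟨_, ⟨y, hy, rfl⟩, hcy⟩ :=
    exists_lt_of_lt_csSup ((nonempty_Icc.2 zero_le_one).image f) (hfn ▸ hc)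
  exact ⟨y, hy, hcy⟩

lemma normalFn_of_forall_lt (hle : ∀ x ∈ Icc (0 : ℝ) 1, h x ≤ 1)
    (hlt : ∀ c < 1, ∃ x ∈ Icc (0 : ℝ) 1, c < h x) : NormalFn h := by
  have hbdd : BddAbove (h '' Icc 0 1) := ⟨1, by rintro _ ⟨x, hx, rfl⟩; exact hle x hx⟩
  refine le_antisymm (csSup_le ⟨h 0, 0, left_mem_Icc.2 zero_le_one, rfl⟩ ?_) ?_
  · rintro _ ⟨x, hx, rfl⟩
    exact hle x hx
  · refine le_of_forall_lt fun c hc => ?_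
    obtain ⟨x, hx, hcx⟩ := hlt c hc
    exact hcx.trans_le (le_csSup hbdd ⟨x, hx, rfl⟩)

lemma ConvexFn.min_le_max (hfc : ConvexFn f) {a b y : ℝ} (ha : a ∈ Icc (0 : ℝ) 1)
    (hb : b ∈ Icc (0 : ℝ) 1) (hyb : y ≤ b) : min (f a) (f b) ≤ f (max a y) := by
  rcases le_total a y with hay | hya
  · rw [max_eq_right hay]
    exact hfc a y b ha.1 hay hyb hb.2
  · rw [max_eq_left hya]
    exact min_le_left _ _

lemma ConvexFn.ite_eq_one_zero (hc : ConvexFn h) (h0 : ∀ x ∈ Icc (0 : ℝ) 1, 0 ≤ h x) :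
    ConvexFn (fun x => if x = 1 then 0 else h x) := by
  intro x y z hx hxy hyz hz1
  show min (if x = 1 then 0 else h x) (if z = 1 then 0 else h z) ≤ if y = 1 then 0 else h y
  have hy1 : y ≤ 1 := hyz.trans hz1
  by_cases hy : y = 1
  · simp [hy, le_antisymm hz1 (hy ▸ hyz)]
  by_cases hz : z = 1
  · rw [if_pos hz, if_neg hy]
    exact (min_le_right _ _).trans (h0 y ⟨hx.trans hxy, hy1⟩)
  have hx1 : x ≠ 1 := fun hx1 => hy (le_antisymm hy1 (hx1 ▸ hxy))
  simpa [hx1, hy, hz] using hc x y z hx hxy hyz hz1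

lemma le_inter (hf : MapsI f) {y z : ℝ} (hy : y ∈ Icc (0 : ℝ) 1) (hz : z ∈ Icc (0 : ℝ) 1) :
    min (f y) (g z) ≤ inter f g (min y z) := by
  refine le_csSup ⟨1, ?_⟩ ⟨y, hy, z, hz, rfl, rfl⟩
  rintro _ ⟨y', hy', -, -, -, rfl⟩
  exact (min_le_left _ _).trans (hf y' hy').2

lemma inter_le_one (hf : MapsI f) {x : ℝ} (hx : x ∈ Icc (0 : ℝ) 1) : inter f g x ≤ 1 := by
  refine csSup_le ⟨_, x, hx, x, hx, min_self x, rfl⟩ ?_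
  rintro _ ⟨y, hy, -, -, -, rfl⟩
  exact (min_le_left _ _).trans (hf y hy).2

lemma inter_nonneg (hf : MapsI f) (hg : MapsI g) {x : ℝ} (hx : x ∈ Icc (0 : ℝ) 1) :
    0 ≤ inter f g x := by
  have hxx := le_inter (g := g) hf hx hx
  rw [min_self] at hxx
  exact (le_min (hf x hx).1 (hg x hx).1).trans hxx

lemma exists_lt_of_lt_inter {x c : ℝ} (hx : x ∈ Icc (0 : ℝ) 1) (hc : c < inter f g x) :
    ∃ y ∈ Icc (0 : ℝ) 1, ∃ z ∈ Icc (0 : ℝ) 1, min y z = x ∧ c < min (f y) (g z) := by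
  obtain ⟨_, ⟨y, hy, z, hz, hyz, rfl⟩, hcv⟩ :=
    exists_lt_of_lt_csSup (by exact ⟨_, x, hx, x, hx, min_self x, rfl⟩) hc
  exact ⟨y, hy, z, hz, hyz, hcv⟩

lemma convexFn_inter (hfc : ConvexFn f) (hf : MapsI f) (hgc : ConvexFn g) :
    ConvexFn (inter f g) := by
  intro x y z hx hxy hyz hz1
  have hy : y ∈ Icc (0 : ℝ) 1 := ⟨hx.trans hxy, hyz.trans hz1⟩
  refine le_of_forall_lt fun c hc => ?_
  obtain ⟨a₁, ha₁, a₂, ha₂, rfl, hca⟩ :=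
    exists_lt_of_lt_inter ⟨hx, hxy.trans hy.2⟩ (lt_min_iff.1 hc).1
  obtain ⟨b₁, hb₁, b₂, hb₂, rfl, hcb⟩ :=
    exists_lt_of_lt_inter ⟨hy.1.trans hyz, hz1⟩ (lt_min_iff.1 hc).2
  have hmax : ∀ a ∈ Icc (0 : ℝ) 1, max a y ∈ Icc (0 : ℝ) 1 :=
    fun a ha => ⟨ha.1.trans (le_max_left _ _), max_le ha.2 hy.2⟩
  have hmin : min (max a₁ y) (max a₂ y) = y := by
    rw [← max_min_distrib_right]
    exact max_eq_right hxy
  calc c < min (min (f a₁) (f b₁)) (min (g a₂) (g b₂)) := by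
        simp only [lt_min_iff] at hca hcb ⊢
        tauto
    _ ≤ min (f (max a₁ y)) (g (max a₂ y)) :=
        min_le_min (hfc.min_le_max ha₁ hb₁ (hyz.trans (min_le_left _ _)))
          (hgc.min_le_max ha₂ hb₂ (hyz.trans (min_le_right _ _)))
    _ ≤ inter f g (min (max a₁ y) (max a₂ y)) := le_inter hf (hmax a₁ ha₁) (hmax a₂ ha₂)
    _ = inter f g y := by rw [hmin]

lemma normalFn_inter (hfn : NormalFn f) (hf : MapsI f) (hgn : NormalFn g) :
    NormalFn (inter f g) := by
  refine normalFn_of_forall_lt (fun x hx => inter_le_one hf hx) fun c hc => ?_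
  obtain ⟨y, hy, hcy⟩ := hfn.exists_lt hc
  obtain ⟨z, hz, hcz⟩ := hgn.exists_lt hc
  exact ⟨min y z, ⟨le_min hy.1 hz.1, (min_le_left _ _).trans hy.2⟩,
    (lt_min hcy hcz).trans_le (le_inter hf hy hz)⟩

lemma normalFn_inter_ite_eq_one_zero (hfn : NormalFn f) (hf : MapsI f) (hgn : NormalFn g)
    (h1 : min (f 1) (g 1) < 1) :
    NormalFn (fun x => if x = 1 then 0 else inter f g x) := by
  refine normalFn_of_forall_lt (fun x hx => ?_) fun c hc => ?_
  · split_ifs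
    exacts [zero_le_one, inter_le_one hf hx]
  -- raising `c` above `min (f 1) (g 1)` keeps the witnesses away from `(1, 1)`
  set c' := max c (min (f 1) (g 1))
  obtain ⟨y, hy, hcy⟩ := hfn.exists_lt (max_lt hc h1)
  obtain ⟨z, hz, hcz⟩ := hgn.exists_lt (max_lt hc h1)
  have hyz : min y z ≠ 1 := by
    intro hyz
    have hy1 : y = 1 := le_antisymm hy.2 (hyz ▸ min_le_left y z)
    have hz1 : z = 1 := le_antisymm hz.2 (hyz ▸ min_le_right y z)
    subst hy1 hz1
    exact (lt_min hcy hcz).not_ge (le_max_right _ _)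
  refine ⟨min y z, ⟨le_min hy.1 hz.1, (min_le_left _ _).trans hy.2⟩, ?_⟩
  rw [if_neg hyz]
  exact (le_max_left _ _).trans_lt ((lt_min hcy hcz).trans_le (le_inter hf hy hz))

end

/-- `f ⋆ g` is normal and convex for normal convex `f, g`. -/
theorem stmt_14 (f g : ℝ → ℝ) (hf : MapsI f) (hg : MapsI g)
    (hfn : NormalFn f) (hfc : ConvexFn f) (hgn : NormalFn g) (hgc : ConvexFn g) :
    NormalFn (star f g) ∧ ConvexFn (star f g) := by
  unfold _root_.star
  split_ifs with _ _ h1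
  · exact ⟨hgn, hgc⟩
  · exact ⟨hfn, hfc⟩
  · exact ⟨normalFn_inter hfn hf hgn, convexFn_inter hfc hf hgc⟩
  · have h1 : min (f 1) (g 1) < 1 :=
      ((min_le_left _ _).trans (hf 1 (right_mem_Icc.2 zero_le_one)).2).lt_of_ne h1
    exact ⟨normalFn_inter_ite_eq_one_zero hfn hf hgn h1,
      (convexFn_inter hfc hf hgc).ite_eq_one_zero fun x hx => inter_nonneg hf hg hx⟩
end
end
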